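/- Any two cores of a finite relational instance I are isomorphic. -/

import Mathlib

abbrev Val (C N : Type) := C ⊕ N
abbrev Atom (ρ C N : Type) := ρ × List (Val C N)
abbrev Inst (ρ C N : Type) := Set (Atom ρ C N)

def applyMap {ρ C N : Type} (h : Val C N → Val C N) (a : Atom ρ C N) : Atom ρ C N :=
  (a.1, a.2.map h)

def IsHom {ρ C N : Type} (h : Val C N → Val C N) (I J : Inst ρ C N) : Prop :=
  (∀ c : C, h (Sum.inl c) = Sum.inl c) ∧ (applyMap h '' I ⊆ J)

/-- `I'` is a core of `I`: `I' ⊆ I`, some endomorphism of `I` maps `I` into `I'`,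
and no endomorphism of `I'` has image a proper subset of `I'`. -/
def IsCore {ρ C N : Type} (I I' : Inst ρ C N) : Prop :=
  I' ⊆ I ∧ (∃ h, IsHom h I I ∧ applyMap h '' I ⊆ I') ∧
    ¬ ∃ g, IsHom g I' I' ∧ applyMap g '' I' ⊂ I'

/-- The active domain of an instance: all values occurring in some atom. -/
def adom {ρ C N : Type} (I : Inst ρ C N) : Set (Val C N) := {v | ∃ a ∈ I, v ∈ a.2}

lemma adom_finite {ρ C N : Type} {I : Inst ρ C N} (h : I.Finite) : (adom I).Finite := by
  have : adom I = ⋃ a ∈ I, {v | v ∈ a.2} := by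
    ext v; simp [adom]
  rw [this]
  exact h.biUnion fun a _ => a.2.finite_toSet

lemma applyMap_comp {ρ C N : Type} (f g : Val C N → Val C N) (a : Atom ρ C N) :
    applyMap f (applyMap g a) = applyMap (f ∘ g) a := by
  simp [applyMap, List.map_map]

lemma mapsTo_adom {ρ C N : Type} {f : Val C N → Val C N} {J K : Inst ρ C N}
    (h : applyMap f '' J ⊆ K) : Set.MapsTo f (adom J) (adom K) := by
  rintro v ⟨a, haJ, hva⟩
  exact ⟨applyMap f a, h ⟨a, haJ, rfl⟩, List.mem_map_of_mem hva⟩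

lemma surjOn_adom {ρ C N : Type} {f : Val C N → Val C N} {J : Inst ρ C N}
    (h : applyMap f '' J = J) : Set.SurjOn f (adom J) (adom J) := by
  rintro v ⟨a, haJ, hva⟩
  rw [← h] at haJ
  obtain ⟨b, hbJ, rfl⟩ := haJ
  obtain ⟨w, hw, rfl⟩ := List.mem_map.mp hva
  exact ⟨w, ⟨b, hbJ, hw⟩, rfl⟩

/-- Any two cores of a finite relational instance are isomorphic: there is a
bijective homomorphism between them whose inverse is also a homomorphism. -/
theorem cores_isomorphic {ρ C N : Type} (I I₁ I₂ : Inst ρ C N)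
    (hfin : I.Finite) (h₁ : IsCore I I₁) (h₂ : IsCore I I₂) :
    ∃ h g : Val C N → Val C N,
      Function.LeftInverse g h ∧ Function.RightInverse g h ∧
      IsHom h I₁ I₂ ∧ IsHom g I₂ I₁ := by
  classical
  obtain ⟨hsub₁, ⟨e₁, he₁hom, he₁img⟩, hmin₁⟩ := h₁
  obtain ⟨hsub₂, ⟨e₂, he₂hom, he₂img⟩, hmin₂⟩ := h₂
  have hc₁ : ∀ c : C, e₁ (Sum.inl c) = Sum.inl c := he₁hom.1
  have hc₂ : ∀ c : C, e₂ (Sum.inl c) = Sum.inl c := he₂hom.1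
  -- degenerate case: no values at all
  rcases isEmpty_or_nonempty (Val C N) with hemp | hne
  · have hid : ∀ a : Atom ρ C N, ∀ f : Val C N → Val C N, applyMap f a = a := by
      intro a f
      obtain ⟨r, l⟩ := a
      cases l with
      | nil => rfl
      | cons x t => exact (hemp.elim x)
    have hII : ∀ J : Inst ρ C N, (∃ f, IsHom f I I ∧ applyMap f '' I ⊆ J) → I ⊆ J := by
      rintro J ⟨f, _, hf⟩ a ha
      have : applyMap f a ∈ J := hf ⟨a, ha, rfl⟩
      rwa [hid a f] at this
    have h1 : I₁ = I := le_antisymm hsub₁ (hII I₁ ⟨e₁, he₁hom, he₁img⟩)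
    have h2 : I₂ = I := le_antisymm hsub₂ (hII I₂ ⟨e₂, he₂hom, he₂img⟩)
    refine ⟨id, id, fun v => rfl, fun v => rfl,
      ⟨fun c => rfl, ?_⟩, ⟨fun c => rfl, ?_⟩⟩ <;>
    · rintro a ⟨b, hb, rfl⟩
      rw [hid b id]
      rw [h1, h2] at *
      exact hb
  -- main case
  have hm12 : applyMap e₂ '' I₁ ⊆ I₂ := (Set.image_mono hsub₁).trans he₂img
  have hm21 : applyMap e₁ '' I₂ ⊆ I₁ := (Set.image_mono hsub₂).trans he₁img
  -- e₁∘e₂ is an endomorphism of I₁, e₂∘e₁ of I₂; by minimality they are surjective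
  have hu_img : applyMap (e₁ ∘ e₂) '' I₁ ⊆ I₁ := by
    rintro a ⟨b, hb, rfl⟩
    rw [← applyMap_comp]
    exact hm21 ⟨applyMap e₂ b, hm12 ⟨b, hb, rfl⟩, rfl⟩
  have hv_img : applyMap (e₂ ∘ e₁) '' I₂ ⊆ I₂ := by
    rintro a ⟨b, hb, rfl⟩
    rw [← applyMap_comp]
    exact hm12 ⟨applyMap e₁ b, hm21 ⟨b, hb, rfl⟩, rfl⟩
  have hu_hom : IsHom (e₁ ∘ e₂) I₁ I₁ := ⟨fun c => by simp [hc₂, hc₁], hu_img⟩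
  have hv_hom : IsHom (e₂ ∘ e₁) I₂ I₂ := ⟨fun c => by simp [hc₁, hc₂], hv_img⟩
  have hEqu : applyMap (e₁ ∘ e₂) '' I₁ = I₁ := by
    by_contra hne'
    exact hmin₁ ⟨e₁ ∘ e₂, hu_hom, hu_img.ssubset_of_ne hne'⟩
  have hEqv : applyMap (e₂ ∘ e₁) '' I₂ = I₂ := by
    by_contra hne'
    exact hmin₂ ⟨e₂ ∘ e₁, hv_hom, hv_img.ssubset_of_ne hne'⟩
  set A := adom I₁ with hA
  set B := adom I₂ with hB
  have hfinA : A.Finite := adom_finite (hfin.subset hsub₁)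
  have hfinB : B.Finite := adom_finite (hfin.subset hsub₂)
  have hM2 : Set.MapsTo e₂ A B := mapsTo_adom hm12
  have hM1 : Set.MapsTo e₁ B A := mapsTo_adom hm21
  have hMu : Set.MapsTo (e₁ ∘ e₂) A A := mapsTo_adom hu_img
  have hMv : Set.MapsTo (e₂ ∘ e₁) B B := mapsTo_adom hv_img
  have hBu : Set.BijOn (e₁ ∘ e₂) A A :=
    (hfinA.surjOn_iff_bijOn_of_mapsTo hMu).mp (surjOn_adom hEqu)
  have hBv : Set.BijOn (e₂ ∘ e₁) B B :=
    (hfinB.surjOn_iff_bijOn_of_mapsTo hMv).mp (surjOn_adom hEqv)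
  have hInj2 : Set.InjOn e₂ A := by
    intro x hx y hy hxy
    exact hBu.injOn hx hy (by simp [Function.comp, hxy])
  have hSurj2 : Set.SurjOn e₂ A B := by
    intro y hy
    obtain ⟨x, hx, hxy⟩ := hBv.surjOn hy
    exact ⟨e₁ x, hM1 hx, hxy⟩
  have hB2 : Set.BijOn e₂ A B := ⟨hM2, hInj2, hSurj2⟩
  -- every atom of I₂ is the image of an atom of I₁
  have hI2eq : applyMap e₂ '' I₁ = I₂ := by
    refine hm12.antisymm ?_
    intro a ha
    rw [← hEqv] at ha
    obtain ⟨b, hb, rfl⟩ := ha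
    rw [← applyMap_comp]
    exact ⟨applyMap e₁ b, hm21 ⟨b, hb, rfl⟩, rfl⟩
  -- constants agree in both active domains
  have hcB : ∀ c : C, Sum.inl c ∈ B → Sum.inl c ∈ A := fun c h => hc₁ c ▸ hM1 h
  have hcA : ∀ c : C, Sum.inl c ∈ A → Sum.inl c ∈ B := fun c h => hc₂ c ▸ hM2 h
  -- the two "extra" parts have the same cardinality
  have hcard : A.ncard = B.ncard := by
    rw [← hB2.image_eq, Set.ncard_image_of_injOn hInj2]
  have hdiff : (B \ A).ncard = (A \ B).ncard := by
    have h1 := Set.ncard_inter_add_ncard_diff_eq_ncard A B hfinA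
    have h2 := Set.ncard_inter_add_ncard_diff_eq_ncard B A hfinB
    rw [Set.inter_comm] at h2
    omega
  have hEquiv : Nonempty ((B \ A : Set (Val C N)) ≃ (A \ B : Set (Val C N))) := by
    haveI := (hfinB.diff (t := A)).to_subtype
    haveI := (hfinA.diff (t := B)).to_subtype
    rw [← Finite.card_eq]
    simpa [Nat.card_coe_set_eq] using hdiff
  obtain ⟨e⟩ := hEquiv
  set τ : Val C N → Val C N :=
    fun w => if hw : w ∈ B \ A then (e ⟨w, hw⟩ : Val C N) else w with hτ
  set τ' : Val C N → Val C N :=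
    fun w => if hw : w ∈ A \ B then (e.symm ⟨w, hw⟩ : Val C N) else w with hτ'
  set p : Val C N → Val C N := Function.invFunOn e₂ A with hp
  have hInv : Set.InvOn p e₂ A B := hB2.invOn_invFunOn
  have hMp : Set.MapsTo p B A := hB2.surjOn.mapsTo_invFunOn
  set H : Val C N → Val C N := fun w => if w ∈ A then e₂ w else τ w with hH
  set G : Val C N → Val C N := fun w => if w ∈ B then p w else τ' w with hG
  have hτval : ∀ w (hw : w ∈ B \ A), τ w = (e ⟨w, hw⟩ : Val C N) := by
    intro w hw; rw [hτ]; exact dif_pos hw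
  have hτ'val : ∀ w (hw : w ∈ A \ B), τ' w = (e.symm ⟨w, hw⟩ : Val C N) := by
    intro w hw; rw [hτ']; exact dif_pos hw
  have hτid : ∀ w, w ∉ B \ A → τ w = w := by
    intro w hw; rw [hτ]; exact dif_neg hw
  have hτ'id : ∀ w, w ∉ A \ B → τ' w = w := by
    intro w hw; rw [hτ']; exact dif_neg hw
  have hGH : Function.LeftInverse G H := by
    intro w
    by_cases hwA : w ∈ A
    · have h1 : H w = e₂ w := if_pos hwA
      have h2 : e₂ w ∈ B := hM2 hwA
      rw [h1, hG]
      simp only [if_pos h2]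
      exact hInv.1 hwA
    by_cases hwB : w ∈ B
    · have hw : w ∈ B \ A := ⟨hwB, hwA⟩
      have h1 : H w = (e ⟨w, hw⟩ : Val C N) := by
        rw [hH]; simp only [if_neg hwA]; exact hτval w hw
      have h2 : (e ⟨w, hw⟩ : Val C N) ∈ A \ B := (e ⟨w, hw⟩).2
      rw [h1, hG]
      simp only [if_neg h2.2]
      rw [hτ'val _ h2]
      simp
    · have h1 : H w = w := by
        rw [hH]; simp only [if_neg hwA]; exact hτid w (fun h => hwB h.1)
      rw [h1, hG]
      simp only [if_neg hwB]
      exact hτ'id w (fun h => hwA h.1)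
  have hHG : Function.RightInverse G H := by
    intro w
    by_cases hwB : w ∈ B
    · have h1 : G w = p w := if_pos hwB
      have h2 : p w ∈ A := hMp hwB
      rw [h1, hH]
      simp only [if_pos h2]
      exact hInv.2 hwB
    by_cases hwA : w ∈ A
    · have hw : w ∈ A \ B := ⟨hwA, hwB⟩
      have h1 : G w = (e.symm ⟨w, hw⟩ : Val C N) := by
        rw [hG]; simp only [if_neg hwB]; exact hτ'val w hw
      have h2 : (e.symm ⟨w, hw⟩ : Val C N) ∈ B \ A := (e.symm ⟨w, hw⟩).2
      rw [h1, hH]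
      simp only [if_neg h2.2]
      rw [hτval _ h2]
      simp
    · have h1 : G w = w := by
        rw [hG]; simp only [if_neg hwB]; exact hτ'id w (fun h => hwA h.1)
      rw [h1, hH]
      simp only [if_neg hwA]
      exact hτid w (fun h => hwB h.1)
  refine ⟨H, G, hGH, hHG, ⟨?_, ?_⟩, ⟨?_, ?_⟩⟩
  · -- H fixes constants
    intro c
    by_cases h : Sum.inl c ∈ A
    · rw [hH]; simp only [if_pos h]; exact hc₂ c
    · have : (Sum.inl c : Val C N) ∉ B \ A := fun hmem => h (hcB c hmem.1)
      rw [hH]; simp only [if_neg h]; exact hτid _ this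
  · -- H maps I₁ into I₂
    rintro a ⟨b, hb, rfl⟩
    have : applyMap H b = applyMap e₂ b := by
      unfold applyMap
      congr 1
      refine List.map_congr_left fun x hx => ?_
      have hxA : x ∈ A := ⟨b, hb, hx⟩
      rw [hH]; simp only [if_pos hxA]
    rw [this]
    exact hm12 ⟨b, hb, rfl⟩
  · -- G fixes constants
    intro c
    by_cases h : Sum.inl c ∈ B
    · have hA' : (Sum.inl c : Val C N) ∈ A := hcB c h
      rw [hG]; simp only [if_pos h]
      have : p (Sum.inl c) = p (e₂ (Sum.inl c)) := by rw [hc₂]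
      rw [this, hInv.1 hA']
    · have : (Sum.inl c : Val C N) ∉ A \ B := fun hmem => h (hcA c hmem.1)
      rw [hG]; simp only [if_neg h]; exact hτ'id _ this
  · -- G maps I₂ into I₁
    rintro a ⟨b, hb, rfl⟩
    rw [← hI2eq] at hb
    obtain ⟨d, hd, rfl⟩ := hb
    have : applyMap G (applyMap e₂ d) = d := by
      rw [applyMap_comp]
      unfold applyMap
      have : d.2.map (G ∘ e₂) = d.2 := by
        have : d.2.map (G ∘ e₂) = d.2.map id := by
          refine List.map_congr_left fun x hx => ?_
          have hxA : x ∈ A := ⟨d, hd, hx⟩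
          have hxB : e₂ x ∈ B := hM2 hxA
          show G (e₂ x) = x
          rw [hG]; simp only [if_pos hxB]
          exact hInv.1 hxA
        rw [this, List.map_id]
      rw [this]
    rw [this]
    exact hd
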